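/- arXiv:1512.04713 — 2 statements merged into one kernel-verified Lean document; each statement's English description precedes it below -/
import Mathlib

section
/- If T : E → F is a bounded linear operator between Banach spaces, then T maps ℓ_p^mid(E) into ℓ_p^mid(F), the induced map T̂((x_j)) = (T(x_j)) is a bounded linear operator, and ‖T̂‖ = ‖T‖ (linear stability of the sequence class ℓ_p^mid). -/
open Filter

noncomputable section

section Defs

variable {E : Type*}

/-- `x ∈ ℓ_p(E)`: absolutely `p`-summable sequences. -/
def MemLpSeq [NormedAddCommGroup E] (p : ℝ) (x : ℕ → E) : Prop :=
  Summable fun j => ‖x j‖ ^ p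

/-- The `ℓ_p` norm `(Σ ‖x j‖^p)^(1/p)`. -/
def lpNorm [NormedAddCommGroup E] (p : ℝ) (x : ℕ → E) : ℝ :=
  (∑' j, ‖x j‖ ^ p) ^ (1 / p)

/-- `x ∈ ℓ_p^w(E)`: weakly `p`-summable sequences. -/
def WSummable [NormedAddCommGroup E] [NormedSpace ℝ E] (p : ℝ) (x : ℕ → E) : Prop :=
  ∀ f : E →L[ℝ] ℝ, Summable fun j => |f (x j)| ^ p

/-- The weak `ℓ_p` norm `sup_{‖f‖ ≤ 1} (Σ |f (x j)|^p)^(1/p)`. -/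
def wNorm [NormedAddCommGroup E] [NormedSpace ℝ E] (p : ℝ) (x : ℕ → E) : ℝ :=
  ⨆ f : {f : E →L[ℝ] ℝ // ‖f‖ ≤ 1}, (∑' j, |f.1 (x j)| ^ p) ^ (1 / p)

/-- `x ∈ ℓ_p^{mid}(E)`: mid `p`-summable sequences. -/
def MidSummable [NormedAddCommGroup E] [NormedSpace ℝ E] (p : ℝ) (x : ℕ → E) : Prop :=
  WSummable p x ∧ ∀ xs : ℕ → E →L[ℝ] ℝ, WSummable p xs →
    Summable fun nj : ℕ × ℕ => |xs nj.1 (x nj.2)| ^ p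

/-- The mid `ℓ_p` norm: sup over the unit ball of `ℓ_p^w(E*)` of the double `ℓ_p` sum. -/
def midNorm [NormedAddCommGroup E] [NormedSpace ℝ E] (p : ℝ) (x : ℕ → E) : ℝ :=
  ⨆ xs : {xs : ℕ → E →L[ℝ] ℝ // WSummable p xs ∧ wNorm p xs ≤ 1},
    (∑' nj : ℕ × ℕ, |xs.1 nj.1 (x nj.2)| ^ p) ^ (1 / p)

/-- `x ∈ ℓ_p^u(E)`: unconditionally `p`-summable sequences (weak norms of tails tend to 0). -/
def USummable [NormedAddCommGroup E] [NormedSpace ℝ E] (p : ℝ) (x : ℕ → E) : Prop :=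
  WSummable p x ∧ Tendsto (fun k => wNorm p fun j => x (j + k)) atTop (nhds 0)

/-- `x ∈ c₀₀(E)`: finitely supported sequences. -/
def FinSupp [Zero E] (x : ℕ → E) : Prop := ∃ N, ∀ j ≥ N, x j = 0

/-- Truncation of a sequence at index `k`. -/
def trunc [Zero E] (k : ℕ) (x : ℕ → E) : ℕ → E := fun j => if j < k then x j else 0

end Defs

/-!
The map `x ↦ T ∘ x` sends `ℓ_p^mid(E)` to `ℓ_p^mid(F)` because `x*_n (T x_j) = (T* x*_n)(x_j)`
and the adjoint `T* = (· ∘L T)` maps `ℓ_p^w(F*)` into `ℓ_p^w(E*)` with norm at most `‖T‖`;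
since the double sums scale linearly with the weak norm of `(x*_n)`, this gives
`‖T x‖_mid ≤ ‖T‖ ‖x‖_mid`. Conversely the sequence `(v, 0, 0, …)` has mid norm `‖v‖`, so no
constant smaller than `‖T‖` works.

The suprema defining the weak and the mid norm are suprema of reals, hence `0` when unbounded;
they are bounded by the uniform boundedness principle for `ℓ_p^w` and by a gliding hump
argument for `ℓ_p^mid`.
-/

open Topology

lemma le_mul_of_forall_lt_imp_le_mul {a b M : ℝ} (h : ∀ c, b < c → a ≤ c * M) :
    a ≤ b * M := by
  have hlim : Tendsto (fun c => c * M) (𝓝[>] b) (𝓝 (b * M)) :=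
    (tendsto_id.mul_const M).mono_left nhdsWithin_le_nhds
  exact ge_of_tendsto hlim (eventually_nhdsWithin_of_forall h)

lemma bddAbove_range_rpow_of_le {ι : Type*} {S : ι → ℝ} {C q : ℝ} (h0 : ∀ i, 0 ≤ S i)
    (hC : ∀ i, S i ≤ C) (hq : 0 ≤ q) : BddAbove (Set.range fun i => S i ^ q) :=
  ⟨C ^ q, by rintro _ ⟨i, rfl⟩; exact Real.rpow_le_rpow (h0 i) (hC i) hq⟩

lemma rpow_tsum_abs_mul_rpow {ι : Type*} {p : ℝ} (hp : p ≠ 0) (c : ℝ) (f : ι → ℝ) :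
    (∑' i, |c * f i| ^ p) ^ (1 / p) = |c| * (∑' i, |f i| ^ p) ^ (1 / p) := by
  have h : ∀ i, |c * f i| ^ p = |c| ^ p * |f i| ^ p := fun i => by
    rw [abs_mul, Real.mul_rpow (abs_nonneg c) (abs_nonneg _)]
  rw [tsum_congr h, tsum_mul_left,
    Real.mul_rpow (by positivity) (tsum_nonneg fun i => by positivity),
    ← Real.rpow_mul (abs_nonneg c), mul_one_div_cancel hp, Real.rpow_one]

lemma summable_prod_and_tsum_le_of_rows {α β : Type*} {f : α × β → ℝ} {b : α → ℝ}
    (hf : 0 ≤ f) (hrow : ∀ a, Summable fun y => f (a, y)) (hle : ∀ a, ∑' y, f (a, y) ≤ b a)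
    (hb : Summable b) : Summable f ∧ ∑' z, f z ≤ ∑' a, b a := by
  have hcol : Summable fun a => ∑' y, f (a, y) :=
    hb.of_nonneg_of_le (fun a => tsum_nonneg fun y => hf _) hle
  have hs : Summable f := (summable_prod_of_nonneg hf).2 ⟨hrow, hcol⟩
  exact ⟨hs, hs.tsum_prod ▸ hcol.tsum_le_tsum hle hb⟩

section PiSingle

variable {α β M : Type*} [AddCommMonoid M] [TopologicalSpace M] [DecidableEq β]

lemma summable_prod_piSingle_iff (i : β) (h : α → M) :
    (Summable fun z : α × β => (Pi.single i (h z.1) : β → M) z.2) ↔ Summable h := by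
  have hsupp : ∀ z ∉ Set.range fun a => (a, i), (Pi.single i (h z.1) : β → M) z.2 = 0 := by
    rintro ⟨a, j⟩ hz
    exact Pi.single_eq_of_ne (fun hj => hz ⟨a, Prod.ext rfl hj.symm⟩) _
  simpa [Function.comp_def] using ((Prod.mk_left_injective i).summable_iff hsupp).symm

lemma tsum_prod_piSingle (i : β) (h : α → M) :
    ∑' z : α × β, (Pi.single i (h z.1) : β → M) z.2 = ∑' a, h a := by
  have hsupp : Function.support (fun z : α × β => (Pi.single i (h z.1) : β → M) z.2) ⊆
      Set.range fun a => (a, i) := by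
    rintro ⟨a, j⟩ hz
    by_contra hj
    exact hz (Pi.single_eq_of_ne (fun hj' => hj ⟨a, Prod.ext rfl hj'.symm⟩) _)
  simpa using ((Prod.mk_left_injective i).tsum_eq hsupp).symm

end PiSingle

lemma ContinuousLinearMap.norm_precomp_le {E F G : Type*} [NormedAddCommGroup E]
    [NormedSpace ℝ E] [NormedAddCommGroup F] [NormedSpace ℝ F] [NormedAddCommGroup G]
    [NormedSpace ℝ G] (L : E →L[ℝ] F) :
    ‖(precomp G L : (F →L[ℝ] G) →L[ℝ] E →L[ℝ] G)‖ ≤ ‖L‖ :=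
  opNorm_le_bound _ (norm_nonneg L) fun g => (g.opNorm_comp_le L).trans_eq (mul_comm _ _)

section WeakSummable

variable {G H : Type*} [NormedAddCommGroup G] [NormedSpace ℝ G] [NormedAddCommGroup H]
  [NormedSpace ℝ H] {p : ℝ} {x : ℕ → G}

lemma abs_apply_single_rpow {ι : Type*} [DecidableEq ι] (hp : p ≠ 0) (f : G →L[ℝ] ℝ) (i : ι)
    (v : G) (j : ι) : |f ((Pi.single i v : ι → G) j)| ^ p = (Pi.single i (|f v| ^ p) : ι → ℝ) j :=
  Pi.apply_single (fun _ w => |f w| ^ p) (fun _ => by simp [Real.zero_rpow hp]) i v j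

lemma wNorm_nonneg (p : ℝ) (x : ℕ → G) : 0 ≤ wNorm p x :=
  Real.iSup_nonneg fun _ => by positivity

lemma WSummable.map (hx : WSummable p x) (L : G →L[ℝ] H) : WSummable p fun j => L (x j) :=
  fun f => hx (f.comp L)

lemma WSummable.smul (hx : WSummable p x) (c : ℝ) : WSummable p fun j => c • x j :=
  hx.map (c • ContinuousLinearMap.id ℝ G)

/-- Banach–Steinhaus, applied to the truncations `f ↦ (f (x j))_{j ∈ s}` from `G*` to `ℓ_p`. -/
lemma WSummable.exists_tsum_le (hp : 1 ≤ p) (hx : WSummable p x) :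
    ∃ C, ∀ f : G →L[ℝ] ℝ, ‖f‖ ≤ 1 → ∑' j, |f (x j)| ^ p ≤ C := by
  set P := ENNReal.ofReal p
  have hP : P.toReal = p := ENNReal.toReal_ofReal (by linarith)
  have : Fact (1 ≤ P) := ⟨ENNReal.one_le_ofReal.mpr hp⟩
  let g : Finset ℕ → (G →L[ℝ] ℝ) →L[ℝ] lp (fun _ : ℕ => ℝ) P := fun s =>
    ∑ j ∈ s, (ContinuousLinearMap.apply ℝ ℝ (x j)).smulRight (lp.single P j 1)
  have hg : ∀ s f, ‖g s f‖ ^ p = ∑ j ∈ s, |f (x j)| ^ p := by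
    intro s f
    have hgsf : g s f = ∑ j ∈ s, lp.single P j (f (x j)) := by
      simp [g, ← lp.single_smul]
    rw [hgsf, ← hP, lp.norm_sum_single (by rw [hP]; linarith)]
    simp
  obtain ⟨C, hC⟩ := banach_steinhaus (g := g) fun f => by
    refine ⟨(∑' j, |f (x j)| ^ p) ^ p⁻¹, fun s => ?_⟩
    rw [Real.le_rpow_inv_iff_of_pos (norm_nonneg _) (tsum_nonneg fun j => by positivity)
      (by linarith), hg]
    exact (hx f).sum_le_tsum s fun j _ => by positivity
  have hC0 : 0 ≤ C := (norm_nonneg _).trans (hC ∅)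
  refine ⟨C ^ p, fun f hf => tsum_le_of_sum_le' (by positivity) fun s => ?_⟩
  rw [← hg]
  gcongr
  calc ‖g s f‖ ≤ ‖g s‖ * ‖f‖ := (g s).le_opNorm f
    _ ≤ C * 1 := mul_le_mul (hC s) hf (norm_nonneg _) hC0
    _ = C := mul_one C

lemma WSummable.rpow_tsum_le_wNorm (hp : 1 ≤ p) (hx : WSummable p x) {f : G →L[ℝ] ℝ}
    (hf : ‖f‖ ≤ 1) : (∑' j, |f (x j)| ^ p) ^ (1 / p) ≤ wNorm p x := by
  obtain ⟨C, hC⟩ := hx.exists_tsum_le hp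
  exact le_ciSup (f := fun f : {f : G →L[ℝ] ℝ // ‖f‖ ≤ 1} => (∑' j, |f.1 (x j)| ^ p) ^ (1 / p))
    (bddAbove_range_rpow_of_le (fun f => tsum_nonneg fun j => by positivity)
      (fun f => hC f.1 f.2) (by positivity)) ⟨f, hf⟩

lemma WSummable.rpow_tsum_le_norm_mul_wNorm (hp : 1 ≤ p) (hx : WSummable p x)
    (f : G →L[ℝ] ℝ) : (∑' j, |f (x j)| ^ p) ^ (1 / p) ≤ ‖f‖ * wNorm p x := by
  refine le_mul_of_forall_lt_imp_le_mul fun c hc => ?_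
  have hc0 : 0 < c := (norm_nonneg f).trans_lt hc
  have hf : ‖c⁻¹ • f‖ ≤ 1 := by
    rw [norm_smul, norm_inv, Real.norm_of_nonneg hc0.le, inv_mul_le_one₀ hc0]
    exact hc.le
  calc (∑' j, |f (x j)| ^ p) ^ (1 / p) = |c| * (∑' j, |(c⁻¹ • f) (x j)| ^ p) ^ (1 / p) := by
        rw [← rpow_tsum_abs_mul_rpow (by positivity)]
        simp [hc0.ne']
    _ ≤ c * wNorm p x := by
        rw [abs_of_pos hc0]
        gcongr
        exact hx.rpow_tsum_le_wNorm hp hf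

lemma WSummable.tsum_le (hp : 1 ≤ p) (hx : WSummable p x) (f : G →L[ℝ] ℝ) :
    ∑' j, |f (x j)| ^ p ≤ (‖f‖ * wNorm p x) ^ p := by
  rw [← Real.rpow_inv_le_iff_of_pos (tsum_nonneg fun j => by positivity)
    (mul_nonneg (norm_nonneg f) (wNorm_nonneg p x)) (by linarith), ← one_div]
  exact hx.rpow_tsum_le_norm_mul_wNorm hp f

lemma WSummable.wNorm_map_le (hp : 1 ≤ p) (hx : WSummable p x) (L : G →L[ℝ] H) :
    wNorm p (fun j => L (x j)) ≤ ‖L‖ * wNorm p x := by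
  refine Real.iSup_le (fun f => ?_) (mul_nonneg (norm_nonneg L) (wNorm_nonneg p x))
  calc (∑' j, |f.1 (L (x j))| ^ p) ^ (1 / p) ≤ ‖f.1.comp L‖ * wNorm p x :=
        hx.rpow_tsum_le_norm_mul_wNorm hp (f.1.comp L)
    _ ≤ ‖L‖ * wNorm p x := by
        refine mul_le_mul_of_nonneg_right ?_ (wNorm_nonneg p x)
        calc ‖f.1.comp L‖ ≤ ‖f.1‖ * ‖L‖ := f.1.opNorm_comp_le L
          _ ≤ 1 * ‖L‖ := by gcongr; exact f.2
          _ = ‖L‖ := one_mul _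

lemma WSummable.wNorm_smul_le (hp : 1 ≤ p) (hx : WSummable p x) (c : ℝ) :
    wNorm p (fun j => c • x j) ≤ |c| * wNorm p x := by
  refine Real.iSup_le (fun f => ?_) (mul_nonneg (abs_nonneg c) (wNorm_nonneg p x))
  simp only [map_smul, smul_eq_mul]
  rw [rpow_tsum_abs_mul_rpow (by positivity)]
  gcongr
  exact hx.rpow_tsum_le_wNorm hp f.2

lemma wSummable_single (hp : p ≠ 0) (i : ℕ) (v : G) : WSummable p (Pi.single i v) :=
  fun f => by
    simp_rw [abs_apply_single_rpow hp]
    exact (hasSum_pi_single i _).summable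

lemma wNorm_single_le (hp : p ≠ 0) (i : ℕ) (v : G) : wNorm p (Pi.single i v) ≤ ‖v‖ := by
  refine Real.iSup_le (fun f => ?_) (norm_nonneg v)
  simp_rw [abs_apply_single_rpow hp, tsum_pi_single]
  rw [one_div, Real.rpow_rpow_inv (abs_nonneg _) hp]
  calc |f.1 v| ≤ ‖f.1‖ * ‖v‖ := f.1.le_opNorm v
    _ ≤ 1 * ‖v‖ := by gcongr; exact f.2
    _ = ‖v‖ := one_mul _

def weightedGlue (c : ℕ → ℝ) (u : ℕ → ℕ → G) : ℕ → G :=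
  fun m => c (Nat.unpair m).1 • u (Nat.unpair m).1 (Nat.unpair m).2

lemma weightedGlue_pair (c : ℕ → ℝ) (u : ℕ → ℕ → G) (k n : ℕ) :
    weightedGlue c u (Nat.pair k n) = c k • u k n := by
  simp [weightedGlue]

lemma wSummable_weightedGlue_and_wNorm_le (hp : 1 ≤ p) {u : ℕ → ℕ → G} {c : ℕ → ℝ}
    (hu : ∀ k, WSummable p (u k)) (hu1 : ∀ k, wNorm p (u k) ≤ 1)
    (hc : Summable fun k => |c k| ^ p) (hc1 : ∑' k, |c k| ^ p ≤ 1) :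
    WSummable p (weightedGlue c u) ∧ wNorm p (weightedGlue c u) ≤ 1 := by
  have key : ∀ f : G →L[ℝ] ℝ, Summable (fun m => |f (weightedGlue c u m)| ^ p) ∧
      ∑' m, |f (weightedGlue c u m)| ^ p ≤ ‖f‖ ^ p := by
    intro f
    let F : ℕ × ℕ → ℝ := fun kn => |c kn.1| ^ p * |f (u kn.1 kn.2)| ^ p
    have hF : (fun m => |f (weightedGlue c u m)| ^ p) = F ∘ Nat.pairEquiv.symm := by
      funext m
      simp [F, weightedGlue, abs_mul, Real.mul_rpow (abs_nonneg _) (abs_nonneg _)]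
    have hrow : ∀ k, ∑' n, F (k, n) ≤ |c k| ^ p * ‖f‖ ^ p := fun k => by
      simp only [F, tsum_mul_left]
      gcongr
      calc ∑' n, |f (u k n)| ^ p ≤ (‖f‖ * wNorm p (u k)) ^ p := (hu k).tsum_le hp f
        _ ≤ (‖f‖ * 1) ^ p := by
          gcongr
          exacts [mul_nonneg (norm_nonneg f) (wNorm_nonneg p _), hu1 k]
        _ = ‖f‖ ^ p := by rw [mul_one]
    have hF0 : 0 ≤ F := fun z => mul_nonneg (by positivity) (by positivity)
    obtain ⟨hFs, hFle⟩ := summable_prod_and_tsum_le_of_rows hF0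
      (fun k => ((hu k) f).mul_left (|c k| ^ p)) hrow (hc.mul_right (‖f‖ ^ p))
    rw [hF, Nat.pairEquiv.symm.summable_iff]
    refine ⟨hFs, (Nat.pairEquiv.symm.tsum_eq F).trans_le (hFle.trans ?_)⟩
    rw [tsum_mul_right]
    exact mul_le_of_le_one_left (by positivity) hc1
  refine ⟨fun f => (key f).1, Real.iSup_le (fun f => ?_) zero_le_one⟩
  calc (∑' m, |f.1 (weightedGlue c u m)| ^ p) ^ (1 / p) ≤ (‖f.1‖ ^ p) ^ (1 / p) := by
        gcongr
        exact (key f.1).2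
    _ = ‖f.1‖ := by rw [one_div, Real.rpow_rpow_inv (norm_nonneg _) (by positivity)]
    _ ≤ 1 := f.2

end WeakSummable

section MidSummable

variable {G H : Type*} [NormedAddCommGroup G] [NormedSpace ℝ G] [NormedAddCommGroup H]
  [NormedSpace ℝ H] {p : ℝ} {x : ℕ → G}

lemma midNorm_nonneg (p : ℝ) (x : ℕ → G) : 0 ≤ midNorm p x :=
  Real.iSup_nonneg fun _ => by positivity

lemma MidSummable.rpow_mul_tsum_le_tsum_weightedGlue (hx : MidSummable p x)
    {u : ℕ → ℕ → G →L[ℝ] ℝ} {c : ℕ → ℝ} (hzs : WSummable p (weightedGlue c u)) (k : ℕ) :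
    |c k| ^ p * ∑' nj : ℕ × ℕ, |u k nj.1 (x nj.2)| ^ p ≤
      ∑' mj : ℕ × ℕ, |weightedGlue c u mj.1 (x mj.2)| ^ p := by
  have hinj : Function.Injective fun nj : ℕ × ℕ => (Nat.pair k nj.1, nj.2) := by
    rintro ⟨n, j⟩ ⟨n', j'⟩ h
    simp only [Prod.mk.injEq, Nat.pair_eq_pair] at h
    simp [h]
  refine le_of_eq_of_le ?_ (tsum_comp_le_tsum_of_inj (hx.2 _ hzs) (fun _ => by positivity) hinj)
  rw [← tsum_mul_left]
  refine tsum_congr fun nj => ?_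
  simp [weightedGlue_pair, abs_mul, Real.mul_rpow (abs_nonneg _) (abs_nonneg _)]

/-- Gliding hump: if the double sums were unbounded on the unit ball of `ℓ_p^w(G*)`, gluing
elements of the unit ball with ever larger double sums, with weights `c k` such that
`∑ |c k|^p = 1`, would give an element of the unit ball whose double sum diverges. -/
lemma MidSummable.exists_tsum_le (hp : 1 ≤ p) (hx : MidSummable p x) :
    ∃ C, ∀ ys : ℕ → G →L[ℝ] ℝ, WSummable p ys → wNorm p ys ≤ 1 →
      ∑' nj : ℕ × ℕ, |ys nj.1 (x nj.2)| ^ p ≤ C := by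
  by_contra! hunb
  set b : ℕ → ℝ := fun k => 1 / 2 / 2 ^ k
  have hb0 : ∀ k, 0 < b k := fun k => by positivity
  choose u huW hu1 hu using fun k : ℕ => hunb (k / b k)
  set c : ℕ → ℝ := fun k => b k ^ p⁻¹
  have hc : ∀ k, |c k| ^ p = b k := fun k => by
    rw [abs_of_nonneg (by positivity), Real.rpow_inv_rpow (hb0 k).le (by positivity)]
  obtain ⟨hzsW, -⟩ := wSummable_weightedGlue_and_wNorm_le hp huW hu1 (c := c)
    (by simpa only [hc] using summable_geometric_two' 1)
    (by simp only [hc, b, tsum_geometric_two' 1, le_refl])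
  obtain ⟨k, hk⟩ := exists_nat_gt (∑' mj : ℕ × ℕ, |weightedGlue c u mj.1 (x mj.2)| ^ p)
  have hbig := (div_lt_iff₀' (hb0 k)).1 (hu k)
  have hle := hx.rpow_mul_tsum_le_tsum_weightedGlue hzsW k
  rw [hc] at hle
  linarith

lemma MidSummable.rpow_tsum_le_midNorm (hp : 1 ≤ p) (hx : MidSummable p x)
    {ys : ℕ → G →L[ℝ] ℝ} (hys : WSummable p ys) (hys1 : wNorm p ys ≤ 1) :
    (∑' nj : ℕ × ℕ, |ys nj.1 (x nj.2)| ^ p) ^ (1 / p) ≤ midNorm p x := by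
  obtain ⟨C, hC⟩ := hx.exists_tsum_le hp
  exact le_ciSup (f := fun ys : {ys : ℕ → G →L[ℝ] ℝ // WSummable p ys ∧ wNorm p ys ≤ 1} =>
      (∑' nj : ℕ × ℕ, |ys.1 nj.1 (x nj.2)| ^ p) ^ (1 / p))
    (bddAbove_range_rpow_of_le (fun ys => tsum_nonneg fun nj => by positivity)
      (fun ys => hC ys.1 ys.2.1 ys.2.2) (by positivity)) ⟨ys, hys, hys1⟩

lemma MidSummable.rpow_tsum_le_wNorm_mul_midNorm (hp : 1 ≤ p) (hx : MidSummable p x)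
    {ys : ℕ → G →L[ℝ] ℝ} (hys : WSummable p ys) :
    (∑' nj : ℕ × ℕ, |ys nj.1 (x nj.2)| ^ p) ^ (1 / p) ≤ wNorm p ys * midNorm p x := by
  refine le_mul_of_forall_lt_imp_le_mul fun c hc => ?_
  have hc0 : 0 < c := (wNorm_nonneg p ys).trans_lt hc
  have hys1 : wNorm p (fun n => c⁻¹ • ys n) ≤ 1 :=
    calc wNorm p (fun n => c⁻¹ • ys n) ≤ |c⁻¹| * wNorm p ys := hys.wNorm_smul_le hp c⁻¹
      _ ≤ 1 := by
        rw [abs_of_pos (inv_pos.2 hc0), inv_mul_le_one₀ hc0]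
        exact hc.le
  calc (∑' nj : ℕ × ℕ, |ys nj.1 (x nj.2)| ^ p) ^ (1 / p)
      = |c| * (∑' nj : ℕ × ℕ, |(c⁻¹ • ys nj.1) (x nj.2)| ^ p) ^ (1 / p) := by
        rw [← rpow_tsum_abs_mul_rpow (by positivity)]
        simp only [smul_apply, smul_eq_mul, mul_inv_cancel_left₀ hc0.ne']
    _ ≤ c * midNorm p x := by
        rw [abs_of_pos hc0]
        gcongr
        exact hx.rpow_tsum_le_midNorm hp (ys := fun n => c⁻¹ • ys n) (hys.smul c⁻¹) hys1

lemma MidSummable.map (hx : MidSummable p x) (L : G →L[ℝ] H) :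
    MidSummable p fun j => L (x j) := by
  refine ⟨hx.1.map L, fun xs hxs => ?_⟩
  let L' : (H →L[ℝ] ℝ) →L[ℝ] G →L[ℝ] ℝ := ContinuousLinearMap.precomp ℝ L
  exact hx.2 (fun n => L' (xs n)) (hxs.map L')

lemma MidSummable.midNorm_map_le (hp : 1 ≤ p) (hx : MidSummable p x) (L : G →L[ℝ] H) :
    midNorm p (fun j => L (x j)) ≤ ‖L‖ * midNorm p x := by
  refine Real.iSup_le (fun xs => ?_) (mul_nonneg (norm_nonneg L) (midNorm_nonneg p x))
  let L' : (H →L[ℝ] ℝ) →L[ℝ] G →L[ℝ] ℝ := ContinuousLinearMap.precomp ℝ L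
  calc (∑' nj : ℕ × ℕ, |xs.1 nj.1 (L (x nj.2))| ^ p) ^ (1 / p)
      = (∑' nj : ℕ × ℕ, |L' (xs.1 nj.1) (x nj.2)| ^ p) ^ (1 / p) := rfl
    _ ≤ wNorm p (fun n => L' (xs.1 n)) * midNorm p x :=
        hx.rpow_tsum_le_wNorm_mul_midNorm hp (ys := fun n => L' (xs.1 n)) (xs.2.1.map L')
    _ ≤ (‖L'‖ * wNorm p xs.1) * midNorm p x := by
        gcongr
        · exact midNorm_nonneg p x
        · exact xs.2.1.wNorm_map_le hp L'
    _ ≤ (‖L‖ * 1) * midNorm p x :=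
        mul_le_mul_of_nonneg_right (mul_le_mul (ContinuousLinearMap.norm_precomp_le L) xs.2.2
          (wNorm_nonneg p _) (norm_nonneg L)) (midNorm_nonneg p x)
    _ = ‖L‖ * midNorm p x := by rw [mul_one]

lemma midSummable_single (hp : p ≠ 0) (i : ℕ) (v : G) : MidSummable p (Pi.single i v) := by
  refine ⟨wSummable_single hp i v, fun xs hxs => ?_⟩
  simp_rw [abs_apply_single_rpow hp]
  exact (summable_prod_piSingle_iff i fun n => |xs n v| ^ p).2
    (hxs (ContinuousLinearMap.apply ℝ ℝ v))

lemma midNorm_single (hp : 1 ≤ p) (i : ℕ) (v : G) : midNorm p (Pi.single i v) = ‖v‖ := by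
  have hp0 : p ≠ 0 := by positivity
  have hsum : ∀ xs : ℕ → G →L[ℝ] ℝ,
      ∑' nj : ℕ × ℕ, |xs nj.1 ((Pi.single i v : ℕ → G) nj.2)| ^ p = ∑' n, |xs n v| ^ p := by
    intro xs
    simp_rw [abs_apply_single_rpow hp0]
    exact tsum_prod_piSingle i fun n => |xs n v| ^ p
  refine le_antisymm (Real.iSup_le (fun xs => ?_) (norm_nonneg v)) ?_
  · have hv : ‖ContinuousLinearMap.apply ℝ ℝ v‖ ≤ ‖v‖ :=
      ContinuousLinearMap.opNorm_le_bound _ (norm_nonneg v) fun f => by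
        simpa [mul_comm] using f.le_opNorm v
    calc (∑' nj : ℕ × ℕ, |xs.1 nj.1 ((Pi.single i v : ℕ → G) nj.2)| ^ p) ^ (1 / p)
        ≤ ‖ContinuousLinearMap.apply ℝ ℝ v‖ * wNorm p xs.1 := by
          rw [hsum]
          exact xs.2.1.rpow_tsum_le_norm_mul_wNorm hp (ContinuousLinearMap.apply ℝ ℝ v)
      _ ≤ ‖v‖ * 1 := mul_le_mul hv xs.2.2 (wNorm_nonneg p _) (norm_nonneg v)
      _ = ‖v‖ := mul_one _
  · obtain ⟨f, hf1, hfv⟩ := exists_dual_vector'' ℝ v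
    have hf := (midSummable_single hp0 i v).rpow_tsum_le_midNorm hp (wSummable_single hp0 0 f)
      ((wNorm_single_le hp0 0 f).trans hf1)
    have hcol : ∀ n, |(Pi.single 0 f : ℕ → G →L[ℝ] ℝ) n v| ^ p =
        (Pi.single 0 (|f v| ^ p) : ℕ → ℝ) n :=
      Pi.apply_single (fun _ (g : G →L[ℝ] ℝ) => |g v| ^ p)
        (fun _ => by simp [Real.zero_rpow hp0]) 0 f
    rwa [hsum, tsum_congr hcol, tsum_pi_single, one_div, Real.rpow_rpow_inv (abs_nonneg _) hp0,
      hfv, RCLike.ofReal_real_eq_id, id, abs_norm] at hf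

end MidSummable

theorem stmt_12_general {E F : Type*} [NormedAddCommGroup E] [NormedSpace ℝ E]
    [NormedAddCommGroup F] [NormedSpace ℝ F]
    (p : ℝ) (hp : 1 ≤ p) (T : E →L[ℝ] F) :
    (∀ x : ℕ → E, MidSummable p x → MidSummable p fun j => T (x j)) ∧
    (∀ x : ℕ → E, MidSummable p x → midNorm p (fun j => T (x j)) ≤ ‖T‖ * midNorm p x) ∧
    (∀ C : ℝ, 0 ≤ C →
      (∀ x : ℕ → E, MidSummable p x → midNorm p (fun j => T (x j)) ≤ C * midNorm p x) →
      ‖T‖ ≤ C) := by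
  refine ⟨fun x hx => hx.map T, fun x hx => hx.midNorm_map_le hp T, fun C hC0 hC => ?_⟩
  refine T.opNorm_le_bound hC0 fun v => ?_
  have hTv : (fun j => T ((Pi.single 0 v : ℕ → E) j)) = Pi.single 0 (T v) :=
    funext (Pi.apply_single (fun _ => T) (fun _ => map_zero T) 0 v)
  simpa only [hTv, midNorm_single hp] using hC _ (midSummable_single (by positivity) 0 v)

/-- linear stability of `ℓ_p^{mid}`: any bounded operator `T : E → F` maps
`ℓ_p^{mid}(E)` into `ℓ_p^{mid}(F)`, the induced map is bounded with
`‖T̂ x‖_{mid,p} ≤ ‖T‖ ‖x‖_{mid,p}`, and `‖T‖` is the least such constant, i.e.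
`‖T̂‖ = ‖T‖`. -/
theorem stmt_12 {E F : Type*} [NormedAddCommGroup E] [NormedSpace ℝ E] [CompleteSpace E]
    [NormedAddCommGroup F] [NormedSpace ℝ F] [CompleteSpace F]
    (p : ℝ) (hp : 1 ≤ p) (T : E →L[ℝ] F) :
    (∀ x : ℕ → E, MidSummable p x → MidSummable p fun j => T (x j)) ∧
    (∀ x : ℕ → E, MidSummable p x → midNorm p (fun j => T (x j)) ≤ ‖T‖ * midNorm p x) ∧
    (∀ C : ℝ, 0 ≤ C →
      (∀ x : ℕ → E, MidSummable p x → midNorm p (fun j => T (x j)) ≤ C * midNorm p x) →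
      ‖T‖ ≤ C) :=
  stmt_12_general p hp T
end
end

section
/- A bounded linear operator T : E → F sends every weakly q-summable sequence to a mid p-summable sequence if and only if it sends every unconditionally q-summable sequence to a mid p-summable sequence. -/
/-!
A weakly `q`-summable `x` need not be unconditionally `q`-summable, but `δ^(1/p) • x` is for every
antitone null `0 ≤ δ ≤ 1`: the weak norm of its `k`-th tail is at most `δ_k^(1/p) ‖x‖_{w,q}`.
Given a weakly `p`-summable `(x*ₙ)` in `F*`, put `bⱼ = ∑ₙ |x*ₙ (T xⱼ)|^p`. Mid `p`-summability of
`T (δ^(1/p) • x)` says `∑ⱼ δⱼ bⱼ < ∞`, and by the Abel–Dini theorem a nonnegative series that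
converges against every such `δ` converges, so `∑ⱼ bⱼ < ∞`. Weak `p`-summability of `T x` is
immediate from `q ≤ p`.
-/

open Filter

noncomputable section

open Topology

theorem summable_abs_rpow_of_le {a : ℕ → ℝ} {p q : ℝ} (hq : 0 < q) (hqp : q ≤ p)
    (h : Summable fun j => |a j| ^ q) : Summable fun j => |a j| ^ p := by
  have hp : 0 < p := hq.trans_le hqp
  have hmem : Memℓp a (ENNReal.ofReal q) :=
    (memℓp_gen_iff (by rwa [ENNReal.toReal_ofReal hq.le])).2 (by simpa [hq.le] using h)
  simpa [memℓp_gen_iff, hp, hp.le] using hmem.of_exponent_ge (ENNReal.ofReal_le_ofReal hqp)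

/-- Abel–Dini: on a block `[N, M)` over which the partial sums at least double, the terms
add up to at least `1 / 2`. -/
theorem not_summable_mul_inv_max_one_sum_range {b : ℕ → ℝ} (hb : ∀ j, 0 ≤ b j)
    (hnb : ¬ Summable b) :
    ¬ Summable fun n => b n * (max 1 (∑ j ∈ Finset.range n, b j))⁻¹ := by
  set S : ℕ → ℝ := fun n => ∑ j ∈ Finset.range n, b j
  have hS : Tendsto S atTop atTop := (not_summable_iff_tendsto_nat_atTop_of_nonneg hb).1 hnb
  intro hg
  obtain ⟨N, hN⟩ :=
    Metric.cauchySeq_iff'.1 hg.hasSum.tendsto_sum_nat.cauchySeq (1 / 2) (by norm_num)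
  obtain ⟨M, hMN, hM⟩ := ((eventually_ge_atTop N).and
    (hS.eventually_ge_atTop (max 1 (2 * S N)))).exists
  have hSM : 0 < S M := one_pos.trans_le (le_of_max_le_left hM)
  have hblock : (S M - S N) / S M ≤
      ∑ n ∈ Finset.Ico N M, b n * (max 1 (S n))⁻¹ := by
    rw [div_eq_mul_inv, ← Finset.sum_Ico_eq_sub _ hMN, Finset.sum_mul]
    refine Finset.sum_le_sum fun n hn => mul_le_mul_of_nonneg_left ?_ (hb n)
    have hSn : S n ≤ S M :=
      Finset.sum_mono_set_of_nonneg hb (Finset.range_mono (Finset.mem_Ico.1 hn).2.le)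
    exact inv_anti₀ (by positivity) (max_le (le_of_max_le_left hM) hSn)
  have hhalf : 1 / 2 ≤ (S M - S N) / S M := by
    rw [le_div_iff₀ hSM]
    linarith [le_of_max_le_right hM]
  have hsmall := hN M hMN
  rw [Real.dist_eq, ← Finset.sum_Ico_eq_sub _ hMN,
    abs_of_nonneg (Finset.sum_nonneg fun n _ => mul_nonneg (hb n) (by positivity))] at hsmall
  linarith

theorem summable_of_forall_antitone_tendsto_zero {b : ℕ → ℝ} (hb : ∀ j, 0 ≤ b j)
    (h : ∀ δ : ℕ → ℝ, (∀ j, δ j ≤ 1) → Antitone δ →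
      Tendsto δ atTop (𝓝 0) → Summable fun j => δ j * b j) :
    Summable b := by
  by_contra hnb
  set S : ℕ → ℝ := fun n => ∑ j ∈ Finset.range n, b j
  have hmax : Tendsto (fun n => max 1 (S n)) atTop atTop :=
    tendsto_atTop_mono (fun n => le_max_right 1 (S n))
      ((not_summable_iff_tendsto_nat_atTop_of_nonneg hb).1 hnb)
  refine not_summable_mul_inv_max_one_sum_range hb hnb ?_
  simp_rw [mul_comm (b _)]
  refine h _ (fun n => inv_le_one_of_one_le₀ (le_max_left _ _))
    (fun m n hmn => inv_anti₀ (by positivity) ?_) (tendsto_inv_atTop_zero.comp hmax)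
  exact max_le_max le_rfl (Finset.sum_mono_set_of_nonneg hb (Finset.range_mono hmn))

section WeakNorm

variable {E F : Type*} [NormedAddCommGroup E] [NormedSpace ℝ E]
  [NormedAddCommGroup F] [NormedSpace ℝ F] {p q : ℝ}

/-- The supremum defining `wNorm q x` is finite, so `wNorm q x` is not its junk value `0`. -/
def WNormBddAbove (q : ℝ) (x : ℕ → E) : Prop :=
  BddAbove (Set.range fun f : {f : E →L[ℝ] ℝ // ‖f‖ ≤ 1} => (∑' j, |f.1 (x j)| ^ q) ^ (1 / q))

theorem wNorm_nonneg_s14 (q : ℝ) (x : ℕ → E) : 0 ≤ wNorm q x :=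
  Real.iSup_nonneg fun _ => by positivity

theorem WNormBddAbove.le_wNorm {x : ℕ → E} (hx : WNormBddAbove q x) {f : E →L[ℝ] ℝ}
    (hf : ‖f‖ ≤ 1) : (∑' j, |f (x j)| ^ q) ^ (1 / q) ≤ wNorm q x :=
  le_ciSup hx ⟨f, hf⟩

theorem WSummable.comp_continuousLinearMap {x : ℕ → E} (hx : WSummable q x) (T : E →L[ℝ] F) :
    WSummable q fun j => T (x j) :=
  fun f => hx (f.comp T)

theorem WSummable.of_exponent_le {x : ℕ → E} (hx : WSummable q x) (hq : 0 < q) (hqp : q ≤ p) :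
    WSummable p x :=
  fun f => summable_abs_rpow_of_le hq hqp (hx f)

theorem WSummable.smul_of_abs_le_one {x : ℕ → E} (hx : WSummable q x) (hq : 0 ≤ q)
    {ε : ℕ → ℝ} (hε : ∀ j, |ε j| ≤ 1) : WSummable q fun j => ε j • x j := by
  intro f
  refine (hx f).of_nonneg_of_le (fun j => by positivity) fun j => ?_
  rw [map_smul, smul_eq_mul, abs_mul]
  exact Real.rpow_le_rpow (by positivity) (mul_le_of_le_one_left (abs_nonneg _) (hε j)) hq

theorem WSummable.summable_prod_iff {xs : ℕ → F →L[ℝ] ℝ} (hxs : WSummable p xs) (v : ℕ → F) :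
    (Summable fun nj : ℕ × ℕ => |xs nj.1 (v nj.2)| ^ p) ↔
      Summable fun j => ∑' n, |xs n (v j)| ^ p := by
  rw [← (Equiv.prodComm ℕ ℕ).summable_iff, Function.comp_def,
    summable_prod_of_nonneg fun _ => by positivity]
  exact and_iff_right fun j => hxs (ContinuousLinearMap.apply ℝ ℝ (v j))

theorem wNorm_tail_smul_le {x : ℕ → E} (hq : 0 < q) (hx : WSummable q x)
    (hbdd : WNormBddAbove q x) {ε : ℕ → ℝ} (hε0 : ∀ j, 0 ≤ ε j) (hε : Antitone ε) (k : ℕ) :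
    wNorm q (fun j => ε (j + k) • x (j + k)) ≤ ε k * wNorm q x := by
  refine Real.iSup_le (fun ⟨f, hf⟩ => ?_) (mul_nonneg (hε0 k) (wNorm_nonneg_s14 q x))
  have hterm : ∀ j, |f (ε (j + k) • x (j + k))| ^ q ≤ ε k ^ q * |f (x (j + k))| ^ q := by
    intro j
    rw [map_smul, smul_eq_mul, abs_mul, abs_of_nonneg (hε0 _),
      ← Real.mul_rpow (hε0 _) (abs_nonneg _)]
    exact Real.rpow_le_rpow (mul_nonneg (hε0 _) (abs_nonneg _))
      (mul_le_mul_of_nonneg_right (hε (Nat.le_add_left k j)) (abs_nonneg _)) hq.le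
  have htail : Summable fun j => ε k ^ q * |f (x (j + k))| ^ q :=
    ((summable_nat_add_iff k).2 (hx f)).mul_left _
  have hεk : 0 ≤ ε k ^ q := Real.rpow_nonneg (hε0 k) q
  have hsum : ∑' j, |f (ε (j + k) • x (j + k))| ^ q ≤ ε k ^ q * ∑' j, |f (x j)| ^ q :=
    calc ∑' j, |f (ε (j + k) • x (j + k))| ^ q
        ≤ ∑' j, ε k ^ q * |f (x (j + k))| ^ q :=
          (htail.of_nonneg_of_le (fun _ => by positivity) hterm).tsum_le_tsum hterm htail
      _ = ε k ^ q * ∑' j, |f (x (j + k))| ^ q := tsum_mul_left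
      _ ≤ ε k ^ q * ∑' j, |f (x j)| ^ q :=
          mul_le_mul_of_nonneg_left (tsum_comp_le_tsum_of_inj (hx f) (fun _ => by positivity)
            (add_left_injective k)) hεk
  calc (∑' j, |f (ε (j + k) • x (j + k))| ^ q) ^ (1 / q)
      ≤ (ε k ^ q * ∑' j, |f (x j)| ^ q) ^ (1 / q) :=
        Real.rpow_le_rpow (by positivity) hsum (by positivity)
    _ = ε k * (∑' j, |f (x j)| ^ q) ^ (1 / q) := by
        rw [Real.mul_rpow hεk (by positivity), ← Real.rpow_mul (hε0 k),
          mul_one_div_cancel hq.ne', Real.rpow_one]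
    _ ≤ ε k * wNorm q x := mul_le_mul_of_nonneg_left (hbdd.le_wNorm hf) (hε0 k)

theorem WSummable.uSummable_smul_of_antitone {x : ℕ → E} (hx : WSummable q x) (hq : 0 < q)
    (hbdd : WNormBddAbove q x) {ε : ℕ → ℝ} (hε1 : ∀ j, ε j ≤ 1) (hε : Antitone ε)
    (hε_lim : Tendsto ε atTop (𝓝 0)) : USummable q fun j => ε j • x j := by
  have hε0 : ∀ j, 0 ≤ ε j := hε.le_of_tendsto hε_lim
  refine ⟨hx.smul_of_abs_le_one hq.le fun j => abs_le.2 ⟨by linarith [hε0 j], hε1 j⟩, ?_⟩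
  exact squeeze_zero (fun k => wNorm_nonneg_s14 _ _) (wNorm_tail_smul_le hq hx hbdd hε0 hε)
    (by simpa using hε_lim.mul_const (wNorm q x))

theorem wNorm_tail_eq_zero_of_not_bddAbove {x : ℕ → E} (hq : 1 ≤ q) (hx : WSummable q x)
    (hbdd : ¬ WNormBddAbove q x) (k : ℕ) : wNorm q (fun j => x (j + k)) = 0 := by
  have hq0 : 0 < q := by linarith
  refine Real.iSup_of_not_bddAbove fun ⟨M, hM⟩ =>
    hbdd ⟨(∑ j ∈ Finset.range k, ‖x j‖ ^ q) ^ (1 / q) + M, ?_⟩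
  rintro _ ⟨⟨f, hf⟩, rfl⟩
  have hhead : ∑ j ∈ Finset.range k, |f (x j)| ^ q ≤ ∑ j ∈ Finset.range k, ‖x j‖ ^ q :=
    Finset.sum_le_sum fun j _ => Real.rpow_le_rpow (abs_nonneg _)
      (by simpa using f.le_of_opNorm_le hf (x j)) hq0.le
  calc (∑' j, |f (x j)| ^ q) ^ (1 / q)
      = (∑ j ∈ Finset.range k, |f (x j)| ^ q + ∑' j, |f (x (j + k))| ^ q) ^ (1 / q) := by
        rw [(hx f).sum_add_tsum_nat_add k]
    _ ≤ (∑ j ∈ Finset.range k, |f (x j)| ^ q) ^ (1 / q) +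
          (∑' j, |f (x (j + k))| ^ q) ^ (1 / q) :=
        Real.rpow_add_le_add_rpow (by positivity) (by positivity) (by positivity)
          ((div_le_one hq0).2 hq)
    _ ≤ _ := add_le_add (Real.rpow_le_rpow (by positivity) hhead (by positivity))
        (hM ⟨⟨f, hf⟩, rfl⟩)

/-- An unbounded weak-norm supremum stays unbounded on every tail, so all tails have the junk
weak norm `0`. -/
theorem WSummable.uSummable_of_not_wNormBddAbove {x : ℕ → E} (hx : WSummable q x) (hq : 1 ≤ q)
    (hbdd : ¬ WNormBddAbove q x) : USummable q x :=
  ⟨hx, by simpa only [wNorm_tail_eq_zero_of_not_bddAbove hq hx hbdd] using tendsto_const_nhds⟩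

theorem midSummable_of_forall_uSummable (hq : 1 ≤ q) (hqp : q ≤ p) (T : E →L[ℝ] F)
    (H : ∀ x : ℕ → E, USummable q x → MidSummable p fun j => T (x j))
    {x : ℕ → E} (hx : WSummable q x) : MidSummable p fun j => T (x j) := by
  by_cases hbdd : WNormBddAbove q x
  swap
  · exact H x (hx.uSummable_of_not_wNormBddAbove hq hbdd)
  have hq0 : 0 < q := by linarith
  have hp0 : 0 < p := by linarith
  refine ⟨(hx.comp_continuousLinearMap T).of_exponent_le hq0 hqp, fun xs hxs => ?_⟩
  refine (hxs.summable_prod_iff fun j => T (x j)).2 ?_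
  refine summable_of_forall_antitone_tendsto_zero (fun j => by positivity)
    fun δ hδ1 hδ hδ_lim => ?_
  have hδ0 : ∀ j, 0 ≤ δ j := hδ.le_of_tendsto hδ_lim
  have hy : USummable q fun j => δ j ^ (1 / p) • x j :=
    hx.uSummable_smul_of_antitone hq0 hbdd
      (fun j => Real.rpow_le_one (hδ0 j) (hδ1 j) (by positivity))
      (fun i j hij => Real.rpow_le_rpow (hδ0 j) (hδ hij) (by positivity))
      (by simpa only [Real.zero_rpow (one_div_pos.2 hp0).ne'] using
        hδ_lim.rpow_const (p := 1 / p) (Or.inr (one_div_pos.2 hp0).le))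
  have hTy : Summable fun j => ∑' n, |xs n (T (δ j ^ (1 / p) • x j))| ^ p :=
    (hxs.summable_prod_iff _).1 ((H _ hy).2 xs hxs)
  refine hTy.congr fun j => ?_
  have hδp : (δ j ^ (1 / p)) ^ p = δ j := by
    rw [← Real.rpow_mul (hδ0 j), one_div_mul_cancel hp0.ne', Real.rpow_one]
  simp only [map_smul, smul_eq_mul, abs_mul, abs_of_nonneg (Real.rpow_nonneg (hδ0 j) _),
    Real.mul_rpow (Real.rpow_nonneg (hδ0 j) _) (abs_nonneg _), hδp, tsum_mul_left]

end WeakNorm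

theorem stmt_14_general {E F : Type*} [NormedAddCommGroup E] [NormedSpace ℝ E]
    [NormedAddCommGroup F] [NormedSpace ℝ F]
    (p q : ℝ) (hq : 1 ≤ q) (hqp : q ≤ p) (T : E →L[ℝ] F) :
    (∀ x : ℕ → E, WSummable q x → MidSummable p fun j => T (x j)) ↔
    (∀ x : ℕ → E, USummable q x → MidSummable p fun j => T (x j)) :=
  ⟨fun h x hx => h x hx.1, fun H _ hx => midSummable_of_forall_uSummable hq hqp T H hx⟩

/-- `T` sends every weakly `q`-summable sequence to a mid `p`-summable
sequence iff it sends every unconditionally `q`-summable sequence to a mid `p`-summable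
sequence. -/
theorem stmt_14 {E F : Type*} [NormedAddCommGroup E] [NormedSpace ℝ E] [CompleteSpace E]
    [NormedAddCommGroup F] [NormedSpace ℝ F] [CompleteSpace F]
    (p q : ℝ) (hq : 1 ≤ q) (hqp : q ≤ p) (T : E →L[ℝ] F) :
    (∀ x : ℕ → E, WSummable q x → MidSummable p fun j => T (x j)) ↔
    (∀ x : ℕ → E, USummable q x → MidSummable p fun j => T (x j)) :=
  stmt_14_general p q hq hqp T
end
end
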